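/- Let α ∈ (0,1/2) be irrational and set δ_n = 4·sin²(π‖q_n α‖) where q_n are the convergent denominators of α. For every n ≥ 0, δ_n > 2·δ_{n+2}; moreover if a_{n+2} ≥ 2 then δ_n > 2·δ_{n+1}. -/

import Mathlib

open Real

/-- Iterates of the Gauss map starting at `α`:  `x₀ = α`, `x_{n+1} = frac (1 / xₙ)`. -/
noncomputable def cfX (α : ℝ) : ℕ → ℝ
  | 0 => α
  | n + 1 => Int.fract (1 / cfX α n)

/-- The `n`-th partial quotient `aₙ` (for `n ≥ 1`) of the continued fraction
`α = [a₁, a₂, …]` of an irrational `α ∈ (0,1)`. -/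
noncomputable def cfA (α : ℝ) (n : ℕ) : ℕ := ⌊1 / cfX α (n - 1)⌋₊

/-- Denominators `qₙ` of the rational convergents `pₙ/qₙ` of `α`:
`q₀ = 1`, `q₁ = a₁`, `q_{n+2} = a_{n+2} q_{n+1} + qₙ`. -/
noncomputable def cfQ (α : ℝ) : ℕ → ℕ
  | 0 => 1
  | 1 => cfA α 1
  | n + 2 => cfA α (n + 2) * cfQ α (n + 1) + cfQ α n

/-- Numerators `pₙ` of the rational convergents of `α`. -/
noncomputable def cfP (α : ℝ) : ℕ → ℕ
  | 0 => 0
  | 1 => 1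
  | n + 2 => cfA α (n + 2) * cfP α (n + 1) + cfP α n

/-- Distance from a real number to the nearest integer. -/
noncomputable def intDist (w : ℝ) : ℝ := |w - round w|

/-- `δₙ = 4 sin²(π ‖qₙ α‖)`. -/
noncomputable def cfDelta (α : ℝ) (n : ℕ) : ℝ :=
  4 * Real.sin (π * intDist ((cfQ α n : ℝ) * α)) ^ 2

/-!
With `xₙ` the Gauss-map iterates of `α`, the signed error of the `n`-th convergent is
`qₙ α - pₙ = (-1)ⁿ θₙ` where `θₙ = x₀ x₁ ⋯ xₙ`, so `‖qₙ α‖ = θₙ ≤ α < 1/2` and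
`δₙ = 4 sin²(π θₙ)`. The identity `aₙ₊₂ xₙ₊₁ = 1 - xₙ₊₁ xₙ₊₂` gives
`θₙ = aₙ₊₂ θₙ₊₁ + θₙ₊₂`; as `θ` is strictly decreasing and `aₙ₊₂ ≥ 1`, this yields
`θₙ > 2 θₙ₊₂`, and `θₙ > 2 θₙ₊₁` when `aₙ₊₂ ≥ 2`. Finally `sin² y > 2 sin² x` whenever
`0 < 2x < y ≤ π/2`, because `sin² 2x = 2 sin² x (1 + cos 2x)`.
-/

theorem Irrational.fract {x : ℝ} (h : Irrational x) : Irrational (Int.fract x) :=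
  h.sub_intCast _

theorem two_mul_sin_sq_lt_sin_sq {x y : ℝ} (hx : 0 < x) (hxy : 2 * x < y) (hy : y ≤ π / 2) :
    2 * sin x ^ 2 < sin y ^ 2 := by
  have hsin : 0 < sin x := sin_pos_of_pos_of_lt_pi hx (by linarith)
  have hcos : 0 < cos (2 * x) := cos_pos_of_mem_Ioo ⟨by linarith, by linarith⟩
  calc 2 * sin x ^ 2 < 2 * sin x ^ 2 * (1 + cos (2 * x)) :=
      lt_mul_of_one_lt_right (by positivity) (by linarith)
    _ = sin (2 * x) ^ 2 := by rw [sin_two_mul, mul_pow, mul_pow, cos_sq x]; ring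
    _ < sin y ^ 2 :=
      pow_lt_pow_left₀ (sin_lt_sin_of_lt_of_le_pi_div_two (by linarith) hy hxy)
        (sin_nonneg_of_nonneg_of_le_pi (by linarith) (by linarith)) two_ne_zero

theorem intDist_eq_abs_sub_of_abs_sub_lt {w : ℝ} {p : ℤ} (h : |w - p| < 1 / 2) :
    intDist w = |w - p| := by
  obtain ⟨hl, hr⟩ := abs_lt.mp h
  rw [intDist, (round_eq_iff (n := p)).mpr ⟨by linarith, by linarith⟩]

/-- `θₙ = x₀ x₁ ⋯ xₙ`, which is `‖qₙ α‖` when `α ∈ (0, 1/2)` is irrational. -/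
noncomputable def cfTheta (α : ℝ) (n : ℕ) : ℝ :=
  ∏ i ∈ Finset.range (n + 1), cfX α i

section ContinuedFraction

variable {α : ℝ}

theorem irrational_cfX (hirr : Irrational α) : ∀ n, Irrational (cfX α n)
  | 0 => hirr
  | n + 1 => by
    rw [cfX, one_div]
    exact (irrational_cfX hirr n).inv.fract

theorem cfX_nonneg (h0 : 0 ≤ α) : ∀ n, 0 ≤ cfX α n
  | 0 => h0
  | _ + 1 => Int.fract_nonneg _

theorem cfX_lt_one (h1 : α < 1) : ∀ n, cfX α n < 1
  | 0 => h1
  | _ + 1 => Int.fract_lt_one _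

theorem cfX_pos (hirr : Irrational α) (h0 : 0 < α) (n : ℕ) : 0 < cfX α n :=
  (cfX_nonneg h0.le n).lt_of_ne' (irrational_cfX hirr n).ne_zero

theorem cfA_succ_eq {n : ℕ} (h : 0 ≤ cfX α n) :
    (cfA α (n + 1) : ℝ) = 1 / cfX α n - cfX α (n + 1) := by
  rw [cfA, Nat.add_sub_cancel, natCast_floor_eq_intCast_floor (by positivity)]
  change _ = _ - Int.fract _
  rw [Int.fract, sub_sub_cancel]

theorem one_le_cfA (hirr : Irrational α) (h0 : 0 < α) (h1 : α < 1) (n : ℕ) :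
    1 ≤ cfA α (n + 1) := by
  rw [cfA, Nat.add_sub_cancel]
  refine Nat.le_floor ?_
  rw [Nat.cast_one, le_div_iff₀ (cfX_pos hirr h0 n), one_mul]
  exact (cfX_lt_one h1 n).le

theorem cfTheta_zero : cfTheta α 0 = α := by
  simp [cfTheta, cfX]

theorem cfTheta_succ (n : ℕ) : cfTheta α (n + 1) = cfTheta α n * cfX α (n + 1) :=
  Finset.prod_range_succ _ _

theorem cfTheta_pos (hirr : Irrational α) (h0 : 0 < α) (n : ℕ) : 0 < cfTheta α n :=
  Finset.prod_pos fun i _ => cfX_pos hirr h0 i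

theorem cfTheta_strictAnti (hirr : Irrational α) (h0 : 0 < α) (h1 : α < 1) :
    StrictAnti (cfTheta α) :=
  strictAnti_nat_of_succ_lt fun n => by
    rw [cfTheta_succ]
    exact mul_lt_of_lt_one_right (cfTheta_pos hirr h0 n) (cfX_lt_one h1 _)

theorem cfTheta_le (hirr : Irrational α) (h0 : 0 < α) (h1 : α < 1) (n : ℕ) :
    cfTheta α n ≤ α :=
  ((cfTheta_strictAnti hirr h0 h1).antitone (Nat.zero_le n)).trans_eq cfTheta_zero

theorem cfTheta_eq_cfA_mul_add (hirr : Irrational α) (n : ℕ) :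
    cfTheta α n = cfA α (n + 2) * cfTheta α (n + 1) + cfTheta α (n + 2) := by
  have hx := (irrational_cfX hirr (n + 1)).ne_zero
  rw [cfA_succ_eq (n := n + 1) (Int.fract_nonneg _), cfTheta_succ (n + 1),
    cfTheta_succ n]
  field_simp
  ring

theorem cfQ_mul_sub_cfP (hirr : Irrational α) (h0 : 0 < α) (n : ℕ) :
    (cfQ α n : ℝ) * α - cfP α n = (-1) ^ n * cfTheta α n := by
  induction n using Nat.twoStepInduction with
  | zero => simp [cfQ, cfP, cfTheta, cfX]
  | one =>
    have ha : (cfA α 1 : ℝ) = 1 / α - cfX α 1 := cfA_succ_eq (n := 0) h0.le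
    simp only [cfQ, cfP, cfTheta_succ 0, cfTheta_zero, ha]
    field_simp
    ring
  | more n ih₀ ih₁ =>
    simp only [cfQ, cfP, Nat.cast_add, Nat.cast_mul]
    linear_combination (cfA α (n + 2) : ℝ) * ih₁ + ih₀ +
      (-1) ^ n * cfTheta_eq_cfA_mul_add hirr n

theorem intDist_cfQ_mul (hirr : Irrational α) (h0 : 0 < α) (h2 : α < 1 / 2) (n : ℕ) :
    intDist (cfQ α n * α) = cfTheta α n := by
  have habs : |(cfQ α n : ℝ) * α - (cfP α n : ℤ)| = cfTheta α n := by
    rw [Int.cast_natCast, cfQ_mul_sub_cfP hirr h0, abs_mul, abs_pow, abs_neg, abs_one, one_pow,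
      one_mul, abs_of_pos (cfTheta_pos hirr h0 n)]
  rw [intDist_eq_abs_sub_of_abs_sub_lt (habs ▸ (cfTheta_le hirr h0 (by linarith) n).trans_lt h2),
    habs]

theorem two_mul_cfTheta_add_two_lt (hirr : Irrational α) (h0 : 0 < α) (h1 : α < 1) (n : ℕ) :
    2 * cfTheta α (n + 2) < cfTheta α n := by
  have ha : (1 : ℝ) ≤ cfA α (n + 2) := by exact_mod_cast one_le_cfA hirr h0 h1 (n + 1)
  have hlt := cfTheta_strictAnti hirr h0 h1 (Nat.lt_succ_self (n + 1))
  nlinarith [cfTheta_eq_cfA_mul_add hirr n, cfTheta_pos hirr h0 (n + 1)]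

theorem two_mul_cfTheta_succ_lt (hirr : Irrational α) (h0 : 0 < α) {n : ℕ}
    (ha : 2 ≤ cfA α (n + 2)) : 2 * cfTheta α (n + 1) < cfTheta α n := by
  have ha' : (2 : ℝ) ≤ cfA α (n + 2) := by exact_mod_cast ha
  nlinarith [cfTheta_eq_cfA_mul_add hirr n, cfTheta_pos hirr h0 (n + 1),
    cfTheta_pos hirr h0 (n + 2)]

theorem two_mul_cfDelta_lt (hirr : Irrational α) (h0 : 0 < α) (h2 : α < 1 / 2) {k m : ℕ}
    (h : 2 * cfTheta α k < cfTheta α m) : 2 * cfDelta α k < cfDelta α m := by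
  have hm := cfTheta_le hirr h0 (by linarith) m
  have hsin := two_mul_sin_sq_lt_sin_sq (mul_pos pi_pos (cfTheta_pos hirr h0 k))
    (by nlinarith [pi_pos] : 2 * (π * cfTheta α k) < π * cfTheta α m)
    (by nlinarith [pi_pos])
  rw [cfDelta, cfDelta, intDist_cfQ_mul hirr h0 h2, intDist_cfQ_mul hirr h0 h2]
  linarith

end ContinuedFraction

/-- For irrational `α ∈ (0, 1/2)` and every `n ≥ 0`:  `δₙ > 2 δ_{n+2}`, and if
`a_{n+2} ≥ 2` then moreover `δₙ > 2 δ_{n+1}`. -/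
theorem cfDelta_decay (α : ℝ) (hirr : Irrational α)
    (hα : α ∈ Set.Ioo (0 : ℝ) (1 / 2)) (n : ℕ) :
    cfDelta α n > 2 * cfDelta α (n + 2) ∧
      (2 ≤ cfA α (n + 2) → cfDelta α n > 2 * cfDelta α (n + 1)) := by
  obtain ⟨h0, h2⟩ := hα
  exact ⟨two_mul_cfDelta_lt hirr h0 h2 (two_mul_cfTheta_add_two_lt hirr h0 (by linarith) n),
    fun ha => two_mul_cfDelta_lt hirr h0 h2 (two_mul_cfTheta_succ_lt hirr h0 ha)⟩
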